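/- arXiv:cs/0607136 — 3 statements merged into one kernel-verified Lean document; each statement's English description precedes it below -/
import Mathlib

section
/- Let (q_k)_{k≥1} be positive reals summing to 1, and for each n ≥ 1 and k ≥ 1 let l_n^{(k)} ∈ [−L, L] be losses, L_N^{(k)} = ∑_{n=1}^N l_n^{(k)}, β_n = exp(−1/√n), weights w_n^{(k)} = q_k β_n^{L_{n−1}^{(k)}}, and normalized weights p_n^{(k)} = w_n^{(k)} / ∑_j w_n^{(j)}. Suppose the learner's loss l_n satisfies l_n ≤ ∑_k p_n^{(k)} l_n^{(k)} for every n. Then for all N ≥ 1, L_N := ∑_{n=1}^N l_n satisfies L_N ≤ ∑_{n=1}^N ∑_k p_n^{(k)} l_n^{(k)} − ∑_{n=1}^N log_{β_n} ∑_k p_n^{(k)} β_n^{l_n^{(k)}} + log_{β_N} ∑_k q_k β_N^{L_N^{(k)}}. -/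
open Real Finset

/-- Power mean ineq: for a probability vector `q` and positive bounded `z`,
`∑ q k * z k ^ λ ≤ (∑ q k * z k) ^ λ` for `λ ∈ (0,1]`. -/
lemma waa_jensen (q z : ℕ → ℝ) (hq : ∀ k, 0 < q k) (hqs : Summable q)
    (hq1 : ∑' k, q k = 1) (hz : ∀ k, 0 < z k) (C : ℝ) (hzC : ∀ k, z k ≤ C)
    (lam : ℝ) (h0 : 0 < lam) (h1 : lam ≤ 1) :
    ∑' k, q k * z k ^ lam ≤ (∑' k, q k * z k) ^ lam := by
  have hC : 0 < C := (hz 0).trans_le (hzC 0)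
  have hsum1 : Summable (fun k => q k * z k) :=
    Summable.of_nonneg_of_le (fun k => mul_nonneg (hq k).le (hz k).le)
      (fun k => mul_le_mul_of_nonneg_left (hzC k) (hq k).le) (hqs.mul_right C)
  have hsum2 : Summable (fun k => q k * z k ^ lam) :=
    Summable.of_nonneg_of_le (fun k => mul_nonneg (hq k).le (Real.rpow_pos_of_pos (hz k) lam).le)
      (fun k => mul_le_mul_of_nonneg_left
        (Real.rpow_le_rpow (hz k).le (hzC k) h0.le) (hq k).le) (hqs.mul_right (C ^ lam))
  set S := ∑' k, q k * z k with hS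
  have hSpos : 0 < S := Summable.tsum_pos hsum1 (fun k => mul_nonneg (hq k).le (hz k).le) 0
    (mul_pos (hq 0) (hz 0))
  have key : ∀ k, q k * z k ^ lam ≤
      (S ^ lam * lam / S) * (q k * z k) + (S ^ lam * (1 - lam)) * q k := by
    intro k
    have h2 : (z k / S) ^ lam * (1:ℝ) ^ (1 - lam) ≤ lam * (z k / S) + (1 - lam) * 1 :=
      Real.geom_mean_le_arith_mean2_weighted h0.le (by linarith)
        (div_nonneg (hz k).le hSpos.le) zero_le_one (by ring)
    have h3 : (z k / S) ^ lam = z k ^ lam / S ^ lam :=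
      Real.div_rpow (hz k).le hSpos.le lam
    simp only [Real.one_rpow, mul_one] at h2
    rw [h3] at h2
    have hSl : (0:ℝ) < S ^ lam := Real.rpow_pos_of_pos hSpos lam
    have h4 : z k ^ lam ≤ S ^ lam * (lam * (z k / S) + (1 - lam)) := by
      have := mul_le_mul_of_nonneg_left h2 hSl.le
      calc z k ^ lam = S ^ lam * (z k ^ lam / S ^ lam) := by field_simp
        _ ≤ S ^ lam * (lam * (z k / S) + (1 - lam)) := this
    calc q k * z k ^ lam ≤ q k * (S ^ lam * (lam * (z k / S) + (1 - lam))) :=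
          mul_le_mul_of_nonneg_left h4 (hq k).le
      _ = (S ^ lam * lam / S) * (q k * z k) + (S ^ lam * (1 - lam)) * q k := by
          field_simp
  have hsum3 : Summable (fun k => (S ^ lam * lam / S) * (q k * z k)
      + (S ^ lam * (1 - lam)) * q k) :=
    (hsum1.mul_left _).add (hqs.mul_left _)
  calc ∑' k, q k * z k ^ lam
      ≤ ∑' k, ((S ^ lam * lam / S) * (q k * z k) + (S ^ lam * (1 - lam)) * q k) :=
        Summable.tsum_le_tsum key hsum2 hsum3
    _ = (S ^ lam * lam / S) * S + (S ^ lam * (1 - lam)) * 1 := by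
        rw [Summable.tsum_add (hsum1.mul_left _) (hqs.mul_left _), tsum_mul_left, tsum_mul_left,
          hq1, ← hS]
    _ = S ^ lam := by field_simp; ring

/-- Monotonicity of `t ↦ (1/t) log ∑ q k exp(-(t * X k))` in `t`. -/
lemma waa_logdiv (q : ℕ → ℝ) (hq : ∀ k, 0 < q k) (hqs : Summable q)
    (hq1 : ∑' k, q k = 1) (X : ℕ → ℝ) (C : ℝ) (hX : ∀ k, |X k| ≤ C)
    (s t : ℝ) (hs : 0 < s) (hst : s ≤ t) :
    Real.log (∑' k, q k * Real.exp (-(s * X k))) / s ≤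
      Real.log (∑' k, q k * Real.exp (-(t * X k))) / t := by
  have ht : 0 < t := hs.trans_le hst
  set z : ℕ → ℝ := fun k => Real.exp (-(t * X k)) with hzdef
  have hz : ∀ k, 0 < z k := fun k => Real.exp_pos _
  have hzC : ∀ k, z k ≤ Real.exp (t * C) := by
    intro k
    apply Real.exp_le_exp.2
    have h1 : -(t * X k) ≤ |t * X k| := neg_le_abs _
    have h2 : |t * X k| = t * |X k| := by rw [abs_mul, abs_of_pos ht]
    nlinarith [hX k, abs_nonneg (X k)]
  have hzpow : ∀ k, z k ^ (s / t) = Real.exp (-(s * X k)) := by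
    intro k
    rw [hzdef, ← Real.exp_mul]
    congr 1
    field_simp
  have hj := waa_jensen q z hq hqs hq1 hz _ hzC (s / t) (by positivity)
    (div_le_one_of_le₀ hst ht.le)
  simp only [hzpow] at hj
  have hsum1 : Summable (fun k => q k * z k) :=
    Summable.of_nonneg_of_le (fun k => mul_nonneg (hq k).le (hz k).le)
      (fun k => mul_le_mul_of_nonneg_left (hzC k) (hq k).le) (hqs.mul_right _)
  have hpos2 : 0 < ∑' k, q k * z k :=
    Summable.tsum_pos hsum1 (fun k => mul_nonneg (hq k).le (hz k).le) 0 (mul_pos (hq 0) (hz 0))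
  have hsum3 : Summable (fun k => q k * Real.exp (-(s * X k))) := by
    refine Summable.of_nonneg_of_le
      (fun k => mul_nonneg (hq k).le (Real.exp_pos _).le) ?_
      (hqs.mul_right (Real.exp (s * C)))
    intro k
    refine mul_le_mul_of_nonneg_left (Real.exp_le_exp.2 ?_) (hq k).le
    have h1 : -(s * X k) ≤ |s * X k| := neg_le_abs _
    have h2 : |s * X k| = s * |X k| := by rw [abs_mul, abs_of_pos hs]
    nlinarith [hX k, abs_nonneg (X k)]
  have hpos1 : 0 < ∑' k, q k * Real.exp (-(s * X k)) :=
    Summable.tsum_pos hsum3 (fun k => mul_nonneg (hq k).le (Real.exp_pos _).le) 0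
      (mul_pos (hq 0) (Real.exp_pos _))
  have hlog : Real.log (∑' k, q k * Real.exp (-(s * X k))) ≤
      (s / t) * Real.log (∑' k, q k * z k) := by
    calc Real.log (∑' k, q k * Real.exp (-(s * X k)))
        ≤ Real.log ((∑' k, q k * z k) ^ (s / t)) := Real.log_le_log hpos1 hj
      _ = (s / t) * Real.log (∑' k, q k * z k) := Real.log_rpow hpos2 _
  rw [div_le_div_iff₀ hs ht]
  calc Real.log (∑' k, q k * Real.exp (-(s * X k))) * t
      ≤ ((s / t) * Real.log (∑' k, q k * z k)) * t :=
        mul_le_mul_of_nonneg_right hlog ht.le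
    _ = Real.log (∑' k, q k * z k) * s := by field_simp


/-- Lemma 9 of Kalnishkan–Vyugin (Weak Aggregating Algorithm with countably
many experts): with positive prior weights `q` summing to 1, expert losses
`l n k ∈ [−L, L]` (rounds `n ≥ 1`), cumulative losses `Lc N k = ∑_{n=1}^N l n k`,
learning rates `β n = exp(−1/√n)`, weights `w n k = q k · (β n)^{Lc (n−1) k}`,
normalized weights `p n k = w n k / ∑ⱼ w n j`, and a learner whose loss
satisfies `ℓ n ≤ ∑ₖ p n k · l n k`, we have for all `N ≥ 1`:
`∑_{n=1}^N ℓ n ≤ ∑_{n=1}^N ∑ₖ p n k l n k − ∑_{n=1}^N log_{β n} ∑ₖ p n k (β n)^{l n k}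
 + log_{β N} ∑ₖ q k (β N)^{Lc N k}`, where `log_β x = ln x / ln β`. -/
theorem waa_lemma9
    (q : ℕ → ℝ) (hq : ∀ k, 0 < q k) (hqsum : ∑' k, q k = 1)
    (L : ℝ) (l : ℕ → ℕ → ℝ) (hl : ∀ n k, |l n k| ≤ L)
    (Lc : ℕ → ℕ → ℝ) (hLc : ∀ N k, Lc N k = ∑ n ∈ Finset.Icc 1 N, l n k)
    (β : ℕ → ℝ) (hβ : ∀ n : ℕ, β n = Real.exp (-(1 / Real.sqrt n)))
    (w : ℕ → ℕ → ℝ) (hw : ∀ n k, w n k = q k * (β n) ^ (Lc (n - 1) k))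
    (p : ℕ → ℕ → ℝ) (hp : ∀ n k, p n k = w n k / ∑' j, w n j)
    (ℓ : ℕ → ℝ) (hℓ : ∀ n, ℓ n ≤ ∑' k, p n k * l n k)
    (N : ℕ) (hN : 1 ≤ N) :
    ∑ n ∈ Finset.Icc 1 N, ℓ n ≤
      (∑ n ∈ Finset.Icc 1 N, ∑' k, p n k * l n k)
      - (∑ n ∈ Finset.Icc 1 N,
          Real.log (∑' k, p n k * (β n) ^ (l n k)) / Real.log (β n))
      + Real.log (∑' k, q k * (β N) ^ (Lc N k)) / Real.log (β N) := by
  have hqs : Summable q := by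
    by_contra h
    rw [tsum_eq_zero_of_not_summable h] at hqsum
    norm_num at hqsum
  have hβpos : ∀ n, 0 < β n := fun n => (hβ n) ▸ Real.exp_pos _
  have hlogβ : ∀ n, Real.log (β n) = -(1 / Real.sqrt n) := by
    intro n; rw [hβ n, Real.log_exp]
  have hLcbound : ∀ m k, |Lc m k| ≤ m * L := by
    intro m k
    rw [hLc]
    calc |∑ n ∈ Finset.Icc 1 m, l n k| ≤ ∑ n ∈ Finset.Icc 1 m, |l n k| :=
          Finset.abs_sum_le_sum_abs _ _
      _ ≤ ∑ n ∈ Finset.Icc 1 m, L := Finset.sum_le_sum (fun n _ => hl n k)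
      _ = m * L := by rw [Finset.sum_const, Nat.card_Icc]; simp [nsmul_eq_mul]
  have hβrpow : ∀ (n : ℕ) (x : ℝ), (β n) ^ x = Real.exp (-(1 / Real.sqrt n * x)) := by
    intro n x
    rw [Real.rpow_def_of_pos (hβpos n), hlogβ n]
    ring_nf
  set S : ℕ → ℕ → ℝ := fun n m => ∑' k, q k * (β n) ^ (Lc m k) with hSdef
  have hsumS : ∀ n m, Summable (fun k => q k * (β n) ^ (Lc m k)) := by
    intro n m
    refine Summable.of_nonneg_of_le
      (fun k => mul_nonneg (hq k).le (Real.rpow_pos_of_pos (hβpos n) _).le)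
      (fun k => ?_) (hqs.mul_right (Real.exp (|Real.log (β n)| * (m * L))))
    refine mul_le_mul_of_nonneg_left ?_ (hq k).le
    rw [Real.rpow_def_of_pos (hβpos n)]
    apply Real.exp_le_exp.2
    calc Real.log (β n) * Lc m k ≤ |Real.log (β n) * Lc m k| := le_abs_self _
      _ = |Real.log (β n)| * |Lc m k| := abs_mul _ _
      _ ≤ |Real.log (β n)| * (m * L) :=
          mul_le_mul_of_nonneg_left (hLcbound m k) (abs_nonneg _)
  have hSpos : ∀ n m, 0 < S n m := fun n m =>
    Summable.tsum_pos (hsumS n m)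
      (fun k => mul_nonneg (hq k).le (Real.rpow_pos_of_pos (hβpos n) _).le) 0
      (mul_pos (hq 0) (Real.rpow_pos_of_pos (hβpos n) _))
  have hLc0 : ∀ k, Lc 0 k = 0 := by intro k; rw [hLc]; simp
  have hS0 : ∀ n, S n 0 = 1 := by
    intro n
    have h : ∀ k, q k * (β n) ^ (Lc 0 k) = q k := by
      intro k; rw [hLc0 k, Real.rpow_zero, mul_one]
    calc S n 0 = ∑' k, q k := tsum_congr h
      _ = 1 := hqsum
  have hW : ∀ n, (∑' j, w n j) = S n (n - 1) := by
    intro n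
    exact tsum_congr (fun k => by rw [hw])
  have hLcsucc : ∀ n k, 1 ≤ n → Lc n k = Lc (n - 1) k + l n k := by
    intro n k hn
    obtain ⟨m, rfl⟩ : ∃ m, n = m + 1 := ⟨n - 1, by omega⟩
    rw [hLc, hLc, Finset.sum_Icc_succ_top (by omega : 1 ≤ m + 1)]
    simp
  have hptsum : ∀ n, 1 ≤ n →
      (∑' k, p n k * (β n) ^ (l n k)) = S n n / S n (n - 1) := by
    intro n hn
    have h1 : ∀ k, p n k * (β n) ^ (l n k) = (q k * (β n) ^ (Lc n k)) / S n (n - 1) := by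
      intro k
      rw [hp, hW, div_mul_eq_mul_div, hw, mul_assoc, ← Real.rpow_add (hβpos n),
        ← hLcsucc n k hn]
    calc (∑' k, p n k * (β n) ^ (l n k))
        = ∑' k, (q k * (β n) ^ (Lc n k)) / S n (n - 1) := tsum_congr h1
      _ = S n n / S n (n - 1) := tsum_div_const
  have hsqrt : ∀ n : ℕ, 1 ≤ n → 0 < Real.sqrt n := by
    intro n hn
    apply Real.sqrt_pos.2
    exact_mod_cast Nat.pos_of_ne_zero (by omega)
  have hSexp : ∀ n m, S n m = ∑' k, q k * Real.exp (-(1 / Real.sqrt n * Lc m k)) := by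
    intro n m
    exact tsum_congr (fun k => by rw [hβrpow])
  -- one-step comparison
  have hstep : ∀ M : ℕ, Real.sqrt ((M + 1 : ℕ) : ℝ) * Real.log (S (M + 1) M) ≤
      Real.sqrt M * Real.log (S M M) := by
    intro M
    rcases Nat.eq_zero_or_pos M with hM | hM
    · subst hM
      rw [hS0 1, Real.log_one]
      simp
    · have hMpos := hsqrt M hM
      have hM1pos := hsqrt (M + 1) (by omega)
      have hld := waa_logdiv q hq hqs hqsum (Lc M) (M * L) (hLcbound M)
        (1 / Real.sqrt ((M + 1 : ℕ) : ℝ)) (1 / Real.sqrt (M : ℝ))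
        (by positivity)
        (by
          apply one_div_le_one_div_of_le hMpos
          apply Real.sqrt_le_sqrt
          exact_mod_cast Nat.le_succ M)
      rw [← hSexp (M + 1) M, ← hSexp M M] at hld
      calc Real.sqrt ((M + 1 : ℕ) : ℝ) * Real.log (S (M + 1) M)
          = Real.log (S (M + 1) M) / (1 / Real.sqrt ((M + 1 : ℕ) : ℝ)) := by
            rw [one_div, div_eq_mul_inv, inv_inv]; ring
        _ ≤ Real.log (S M M) / (1 / Real.sqrt (M : ℝ)) := hld
        _ = Real.sqrt M * Real.log (S M M) := by rw [one_div, div_eq_mul_inv, inv_inv]; ring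
  -- key telescoping inequality
  have key : ∀ M : ℕ, ∑ n ∈ Finset.Icc 1 M,
      Real.sqrt n * (Real.log (S n (n - 1)) - Real.log (S n n)) ≤
      -(Real.sqrt M * Real.log (S M M)) := by
    intro M
    induction M with
    | zero => simp
    | succ M ih =>
      rw [Finset.sum_Icc_succ_top (by omega : 1 ≤ M + 1)]
      have h1 := hstep M
      have h2 : (M + 1) - 1 = M := by omega
      rw [h2]
      linarith
  -- assemble
  have hA : ∑ n ∈ Finset.Icc 1 N, ℓ n ≤ ∑ n ∈ Finset.Icc 1 N, ∑' k, p n k * l n k :=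
    Finset.sum_le_sum (fun n _ => hℓ n)
  have hB : ∑ n ∈ Finset.Icc 1 N,
      Real.log (∑' k, p n k * (β n) ^ (l n k)) / Real.log (β n) =
      ∑ n ∈ Finset.Icc 1 N,
      Real.sqrt n * (Real.log (S n (n - 1)) - Real.log (S n n)) := by
    apply Finset.sum_congr rfl
    intro n hn
    have hn1 : 1 ≤ n := (Finset.mem_Icc.1 hn).1
    rw [hptsum n hn1, Real.log_div (hSpos n n).ne' (hSpos n (n - 1)).ne', hlogβ n,
      div_neg, one_div, div_eq_mul_inv, inv_inv]
    ring
  have hCeq : Real.log (∑' k, q k * (β N) ^ (Lc N k)) / Real.log (β N) =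
      -(Real.sqrt N * Real.log (S N N)) := by
    have h : (∑' k, q k * (β N) ^ (Lc N k)) = S N N := rfl
    rw [h, hlogβ N, div_neg, one_div, div_eq_mul_inv, inv_inv]
    ring
  rw [hB, hCeq]
  linarith [key N]
end

section
/- Under the hypotheses of the Weak Aggregating Algorithm lemma (positive weights q_k summing to 1, losses l_n^{(k)} ∈ [−L, L], p_n^{(k)} the normalized weights with β_n = exp(−1/√n), and learner's loss satisfying l_n ≤ ∑_k p_n^{(k)} l_n^{(k)}), for all N ≥ 1 and every expert K: L_N ≤ L_N^{(K)} + (L² e^L + ln(1/q_K)) √N. -/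
/-!
With `c = √(n+1)` and `W_m(c) = ∑ₖ q k e^{-Lc m k / c}`, the weights `p (n+1)` are the Gibbs
weights `q k e^{-Lc n k / c} / W_n(c)`. From `e^t ≤ 1 + t + t²/2 e^{|t|}` and `ln t ≤ t - 1`,
the learner's loss in round `n+1` is at most `c ln W_n(c) - c ln W_{n+1}(c) + L²e^L/(2c)`.
Since `c ln W_m(c)` is the logarithm of the power mean of order `1/c` of the `e^{-Lc m k}`, it does
not increase with `c`, so the potential `Φ m = √m ln W_m(√m)` telescopes:
`∑ ℓ ≤ -Φ N + L²e^L/2 ∑ 1/√n`. Keeping the single term `K` of `W_N` and `∑ 1/√n ≤ 2√N` finish.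
-/

open Real Finset

theorem Real.exp_le_one_add_add_sq_div_two_of_nonpos {t : ℝ} (ht : t ≤ 0) :
    exp t ≤ 1 + t + t ^ 2 / 2 := by
  have hpos : 0 < 1 - t + t ^ 2 / 2 := by nlinarith
  have h := quadratic_le_exp_of_nonneg (neg_nonneg.2 ht)
  rw [exp_neg, le_inv_comm₀ (by nlinarith) (exp_pos t)] at h
  calc exp t ≤ (1 + -t + (-t) ^ 2 / 2)⁻¹ := h
    _ ≤ 1 + t + t ^ 2 / 2 := by
      rw [inv_le_iff_one_le_mul₀ (by nlinarith)]; nlinarith [sq_nonneg (t ^ 2)]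

theorem Real.exp_le_one_add_add_sq_div_two_mul_exp_of_nonneg {t : ℝ} (ht : 0 ≤ t) :
    exp t ≤ 1 + t + t ^ 2 / 2 * exp t := by
  have hexp : HasSum (fun n : ℕ => t ^ n / n.factorial) (exp t) := by
    rw [exp_eq_exp_ℝ]; exact NormedSpace.expSeries_div_hasSum_exp t
  have htail : HasSum (fun n : ℕ => t ^ (n + 2) / (n + 2).factorial) (exp t - (1 + t)) := by
    simpa [sum_range_succ] using (hasSum_nat_add_iff' 2).2 hexp
  have hterm : ∀ n : ℕ, t ^ (n + 2) / (n + 2).factorial ≤ t ^ 2 / 2 * (t ^ n / n.factorial) := by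
    intro n
    rw [Nat.factorial_succ, Nat.factorial_succ]
    push_cast
    rw [pow_add, div_le_iff₀ (by positivity)]
    field_simp
    have h2 : (2 : ℝ) ≤ (n + 1) * (n + 1 + 1) := by nlinarith [n.cast_nonneg (α := ℝ)]
    have := mul_le_mul_of_nonneg_left h2 (mul_nonneg (pow_nonneg ht n) (sq_nonneg t))
    linarith
  linarith [hasSum_le hterm htail (hexp.mul_left (t ^ 2 / 2))]

theorem Real.exp_le_one_add_add_sq_div_two_mul_exp_abs (t : ℝ) :
    exp t ≤ 1 + t + t ^ 2 / 2 * exp |t| := by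
  rcases le_total t 0 with ht | ht
  · have := one_le_exp (abs_nonneg t)
    nlinarith [exp_le_one_add_add_sq_div_two_of_nonpos ht, sq_nonneg t]
  · rw [abs_of_nonneg ht]; exact exp_le_one_add_add_sq_div_two_mul_exp_of_nonneg ht

theorem abs_neg_div_le_of_one_le {x L c : ℝ} (hx : |x| ≤ L) (hc : 1 ≤ c) : |-x / c| ≤ L := by
  rw [abs_div, abs_neg, abs_of_pos (one_pos.trans_le hc)]
  exact (div_le_self (abs_nonneg x) hc).trans hx

theorem mul_exp_neg_div_le {x L c : ℝ} (hx : |x| ≤ L) (hc : 1 ≤ c) :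
    c * exp (-x / c) ≤ c - x + L ^ 2 * exp L / (2 * c) := by
  have hc0 : 0 < c := one_pos.trans_le hc
  have hsq : (-x / c) ^ 2 ≤ L ^ 2 / c ^ 2 := by
    rw [div_pow, neg_sq]
    exact div_le_div_of_nonneg_right (sq_le_sq' (abs_le.1 hx).1 (abs_le.1 hx).2) (sq_nonneg c)
  have hquad : exp (-x / c) ≤ 1 + -x / c + L ^ 2 / c ^ 2 / 2 * exp L :=
    (exp_le_one_add_add_sq_div_two_mul_exp_abs _).trans
      (by gcongr; exact abs_neg_div_le_of_one_le hx hc)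
  calc c * exp (-x / c) ≤ c * (1 + -x / c + L ^ 2 / c ^ 2 / 2 * exp L) :=
        mul_le_mul_of_nonneg_left hquad hc0.le
    _ = c - x + L ^ 2 * exp L / (2 * c) := by field_simp; ring

theorem tsum_mul_le_neg_mul_log_tsum_mul_exp {ι : Type*} {p x : ι → ℝ} {L c : ℝ}
    (hp : ∀ k, 0 ≤ p k) (hps : Summable p) (hp1 : ∑' k, p k = 1) (hx : ∀ k, |x k| ≤ L)
    (hc : 1 ≤ c) :
    ∑' k, p k * x k ≤ -c * log (∑' k, p k * exp (-x k / c)) + L ^ 2 * exp L / (2 * c) := by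
  set D := L ^ 2 * exp L / (2 * c)
  have hlow : ∀ k, exp (-L) ≤ exp (-x k / c) := fun k =>
    exp_le_exp.2 (neg_le_of_abs_le (abs_neg_div_le_of_one_le (hx k) hc))
  have hxs : Summable fun k => p k * x k :=
    Summable.of_norm_bounded (hps.mul_right L) fun k => by
      rw [Real.norm_eq_abs, abs_mul, abs_of_nonneg (hp k)]
      exact mul_le_mul_of_nonneg_left (hx k) (hp k)
  have hes : Summable fun k => p k * exp (-x k / c) :=
    (hps.mul_right (exp L)).of_nonneg_of_le (fun k => by have := hp k; positivity)
      fun k => mul_le_mul_of_nonneg_left (exp_le_exp.2 (le_of_abs_le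
        (abs_neg_div_le_of_one_le (hx k) hc))) (hp k)
  set S := ∑' k, p k * exp (-x k / c)
  have hS : 0 < S := by
    have := (hps.mul_right (exp (-L))).tsum_le_tsum
      (fun k => mul_le_mul_of_nonneg_left (hlow k) (hp k)) hes
    rw [tsum_mul_right, hp1, one_mul] at this
    exact (exp_pos _).trans_le this
  calc ∑' k, p k * x k ≤ ∑' k, ((c + D) * p k - c * (p k * exp (-x k / c))) :=
        hxs.tsum_le_tsum (fun k => by nlinarith [mul_exp_neg_div_le (hx k) hc, hp k])
          ((hps.mul_left _).sub (hes.mul_left c))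
    _ = c + D - c * S := by
        rw [(hps.mul_left _).tsum_sub (hes.mul_left c), tsum_mul_left, tsum_mul_left, hp1, mul_one]
    _ ≤ -c * log S + D := by nlinarith [log_le_sub_one_of_pos hS]

theorem tsum_mul_rpow_le {ι : Type*} {w b : ι → ℝ} (hw : ∀ i, 0 ≤ w i) (hb : ∀ i, 0 ≤ b i)
    (hws : Summable w) (hwbs : Summable fun i => w i * b i) {θ : ℝ} (hθ0 : 0 < θ) (hθ1 : θ < 1) :
    ∑' i, w i * b i ^ θ ≤ (∑' i, w i) ^ (1 - θ) * (∑' i, w i * b i) ^ θ := by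
  have hconj : ((1 - θ)⁻¹).HolderConjugate θ⁻¹ := by
    rw [holderConjugate_iff, inv_inv, inv_inv]
    exact ⟨one_lt_inv₀ (by linarith) |>.2 (by linarith), by ring⟩
  have hwb : ∀ i, 0 ≤ w i * b i := fun i => mul_nonneg (hw i) (hb i)
  have hsplit : ∀ i, w i * b i ^ θ = w i ^ (1 - θ) * (w i * b i) ^ θ := by
    intro i
    rw [mul_rpow (hw i) (hb i), ← mul_assoc, ← rpow_add' (hw i) (by norm_num), sub_add_cancel,
      rpow_one]
  have hw' : ∀ i, (w i ^ (1 - θ)) ^ (1 - θ)⁻¹ = w i :=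
    fun i => rpow_rpow_inv (hw i) (by linarith)
  have hwb' : ∀ i, ((w i * b i) ^ θ) ^ θ⁻¹ = w i * b i :=
    fun i => rpow_rpow_inv (hwb i) hθ0.ne'
  have := inner_le_Lp_mul_Lq_tsum_of_nonneg hconj (fun i => rpow_nonneg (hw i) (1 - θ))
    (fun i => rpow_nonneg (hwb i) θ) (by simpa only [hw'] using hws)
    (by simpa only [hwb'] using hwbs)
  simpa only [hsplit, hw', hwb', one_div, inv_inv] using this

noncomputable def expWeightSum {ι : Type*} (q a : ι → ℝ) (c : ℝ) : ℝ :=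
  ∑' k, q k * exp (-a k / c)

noncomputable def gibbsWeight {ι : Type*} (q a : ι → ℝ) (c : ℝ) (k : ι) : ℝ :=
  q k * exp (-a k / c) / expWeightSum q a c

section ExpWeights

variable {ι : Type*} {q a : ι → ℝ} {B c : ℝ}

theorem summable_mul_exp_neg_div (hq : ∀ k, 0 ≤ q k) (hqs : Summable q) (ha : ∀ k, B ≤ a k)
    (hc : 0 < c) : Summable fun k => q k * exp (-a k / c) :=
  (hqs.mul_right (exp (-B / c))).of_nonneg_of_le (fun k => by have := hq k; positivity)
    fun k => mul_le_mul_of_nonneg_left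
      (exp_le_exp.2 (div_le_div_of_nonneg_right (by linarith [ha k]) hc.le)) (hq k)

theorem mul_exp_le_expWeightSum (hq : ∀ k, 0 ≤ q k) (hqs : Summable q) (ha : ∀ k, B ≤ a k)
    (hc : 0 < c) (K : ι) : q K * exp (-a K / c) ≤ expWeightSum q a c :=
  (summable_mul_exp_neg_div hq hqs ha hc).le_tsum K fun k _ => by have := hq k; positivity

theorem expWeightSum_pos [Nonempty ι] (hq : ∀ k, 0 < q k) (hqs : Summable q)
    (ha : ∀ k, B ≤ a k) (hc : 0 < c) : 0 < expWeightSum q a c := by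
  obtain ⟨K⟩ := ‹Nonempty ι›
  have := hq K
  exact (by positivity : 0 < q K * exp (-a K / c)).trans_le
    (mul_exp_le_expWeightSum (fun k => (hq k).le) hqs ha hc K)

theorem mul_log_le_mul_log_expWeightSum (hq : ∀ k, 0 < q k) (hqs : Summable q)
    (ha : ∀ k, B ≤ a k) (hc : 0 < c) (K : ι) :
    c * log (q K) - a K ≤ c * log (expWeightSum q a c) := by
  have hK := hq K
  have hlog := log_le_log (by positivity)
    (mul_exp_le_expWeightSum (fun k => (hq k).le) hqs ha hc K)
  rw [log_mul hK.ne' (exp_pos _).ne', log_exp] at hlog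
  have := mul_le_mul_of_nonneg_left hlog hc.le
  rwa [mul_add, mul_div_cancel₀ _ hc.ne', ← sub_eq_add_neg] at this

theorem expWeightSum_le_rpow (hq : ∀ k, 0 < q k) (hqs : Summable q) (hq1 : ∑' k, q k = 1)
    (ha : ∀ k, B ≤ a k) {c₁ c₂ : ℝ} (hc₁ : 0 < c₁) (hc₁₂ : c₁ < c₂) :
    expWeightSum q a c₂ ≤ expWeightSum q a c₁ ^ (c₁ / c₂) := by
  have hc₂ : 0 < c₂ := hc₁.trans hc₁₂
  have hpow : ∀ k, q k * exp (-a k / c₁) ^ (c₁ / c₂) = q k * exp (-a k / c₂) := by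
    intro k
    rw [← exp_mul]
    field_simp
  have := tsum_mul_rpow_le (fun k => (hq k).le) (fun k => (exp_pos (-a k / c₁)).le) hqs
    (summable_mul_exp_neg_div (fun k => (hq k).le) hqs ha hc₁) (div_pos hc₁ hc₂)
    ((div_lt_one hc₂).2 hc₁₂)
  simpa only [expWeightSum, hpow, hq1, one_rpow, one_mul] using this

theorem mul_log_expWeightSum_le [Nonempty ι] (hq : ∀ k, 0 < q k) (hqs : Summable q)
    (hq1 : ∑' k, q k = 1) (ha : ∀ k, B ≤ a k) {c₁ c₂ : ℝ} (hc₁ : 0 < c₁) (hc₁₂ : c₁ ≤ c₂) :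
    c₂ * log (expWeightSum q a c₂) ≤ c₁ * log (expWeightSum q a c₁) := by
  rcases hc₁₂.eq_or_lt with rfl | hlt
  · rfl
  have hc₂ : 0 < c₂ := hc₁.trans hlt
  have hG₁ := expWeightSum_pos hq hqs ha hc₁
  calc c₂ * log (expWeightSum q a c₂)
      ≤ c₂ * log (expWeightSum q a c₁ ^ (c₁ / c₂)) :=
        mul_le_mul_of_nonneg_left (log_le_log (expWeightSum_pos hq hqs ha hc₂)
          (expWeightSum_le_rpow hq hqs hq1 ha hc₁ hlt)) hc₂.le
    _ = c₁ * log (expWeightSum q a c₁) := by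
        rw [log_rpow hG₁]; field_simp

theorem gibbsWeight_nonneg (hq : ∀ k, 0 ≤ q k) (k : ι) : 0 ≤ gibbsWeight q a c k := by
  unfold gibbsWeight expWeightSum
  have := hq k
  have : 0 ≤ ∑' k, q k * exp (-a k / c) := tsum_nonneg fun k => by have := hq k; positivity
  positivity

theorem tsum_gibbsWeight_mul_exp (x : ι → ℝ) :
    ∑' k, gibbsWeight q a c k * exp (-x k / c) = expWeightSum q (a + x) c / expWeightSum q a c := by
  rw [expWeightSum, ← tsum_div_const]
  refine tsum_congr fun k => ?_
  rw [gibbsWeight, div_mul_eq_mul_div, mul_assoc, ← exp_add, Pi.add_apply, neg_add, add_div]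

theorem tsum_gibbsWeight [Nonempty ι] (hq : ∀ k, 0 < q k) (hqs : Summable q) (ha : ∀ k, B ≤ a k)
    (hc : 0 < c) : ∑' k, gibbsWeight q a c k = 1 := by
  simpa [div_self (expWeightSum_pos hq hqs ha hc).ne'] using
    tsum_gibbsWeight_mul_exp (q := q) (a := a) (c := c) 0

theorem tsum_gibbsWeight_mul_le [Nonempty ι] (hq : ∀ k, 0 < q k) (hqs : Summable q)
    (ha : ∀ k, B ≤ a k) {x : ι → ℝ} {L : ℝ} (hx : ∀ k, |x k| ≤ L) (hc : 1 ≤ c) :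
    ∑' k, gibbsWeight q a c k * x k ≤
      c * log (expWeightSum q a c) - c * log (expWeightSum q (a + x) c) +
        L ^ 2 * exp L / (2 * c) := by
  have hc0 : 0 < c := one_pos.trans_le hc
  have hax : ∀ k, B - L ≤ (a + x) k := fun k => by
    rw [Pi.add_apply]; linarith [ha k, neg_le_of_abs_le (hx k)]
  have hps : Summable (gibbsWeight q a c) :=
    (summable_mul_exp_neg_div (fun k => (hq k).le) hqs ha hc0).div_const _
  have := tsum_mul_le_neg_mul_log_tsum_mul_exp (gibbsWeight_nonneg (fun k => (hq k).le)) hps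
    (tsum_gibbsWeight hq hqs ha hc0) hx hc
  rw [tsum_gibbsWeight_mul_exp, log_div (expWeightSum_pos hq hqs hax hc0).ne'
    (expWeightSum_pos hq hqs ha hc0).ne'] at this
  linarith

end ExpWeights

theorem sum_Icc_one_div_sqrt_le (N : ℕ) : ∑ n ∈ Icc 1 N, 1 / √n ≤ 2 * √N := by
  induction N with
  | zero => simp
  | succ m ih =>
    rw [sum_Icc_succ_top (by omega)]
    have hm : √m ^ 2 = m := sq_sqrt m.cast_nonneg
    have hm1 : √(m + 1 : ℕ) ^ 2 = m + 1 := by rw [sq_sqrt (by positivity)]; push_cast; ring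
    have hpos : 0 < √(m + 1 : ℕ) := sqrt_pos.2 (by positivity)
    have hstep : 1 / √(m + 1 : ℕ) ≤ 2 * (√(m + 1 : ℕ) - √m) := by
      rw [div_le_iff₀ hpos]; nlinarith [sq_nonneg (√(m + 1 : ℕ) - √m), sqrt_nonneg m]
    linarith

theorem sum_Icc_le_sub_add_sum_of_le {f Φ d : ℕ → ℝ}
    (h : ∀ n, f (n + 1) ≤ Φ n - Φ (n + 1) + d (n + 1)) (N : ℕ) :
    ∑ n ∈ Icc 1 N, f n ≤ Φ 0 - Φ N + ∑ n ∈ Icc 1 N, d n := by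
  induction N with
  | zero => simp
  | succ m ih =>
    rw [sum_Icc_succ_top (by omega), sum_Icc_succ_top (by omega)]
    linarith [h m]

/-- Lemma 5 of Kalnishkan–Vyugin: under the Weak Aggregating Algorithm
hypotheses (prior weights `q k > 0` summing to 1, expert losses
`l n k ∈ [−L, L]`, `β n = exp(−1/√n)`, normalized weights `p`, and learner's
loss `ℓ n ≤ ∑ₖ p n k l n k`), for all `N ≥ 1` and every expert `K`:
`∑_{n=1}^N ℓ n ≤ ∑_{n=1}^N l n K + (L² e^L + ln(1/q K)) √N`. -/
theorem waa_lemma5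
    (q : ℕ → ℝ) (hq : ∀ k, 0 < q k) (hqsum : ∑' k, q k = 1)
    (L : ℝ) (l : ℕ → ℕ → ℝ) (hl : ∀ n k, |l n k| ≤ L)
    (Lc : ℕ → ℕ → ℝ) (hLc : ∀ N k, Lc N k = ∑ n ∈ Finset.Icc 1 N, l n k)
    (β : ℕ → ℝ) (hβ : ∀ n : ℕ, β n = Real.exp (-(1 / Real.sqrt n)))
    (w : ℕ → ℕ → ℝ) (hw : ∀ n k, w n k = q k * (β n) ^ (Lc (n - 1) k))
    (p : ℕ → ℕ → ℝ) (hp : ∀ n k, p n k = w n k / ∑' j, w n j)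
    (ℓ : ℕ → ℝ) (hℓ : ∀ n, ℓ n ≤ ∑' k, p n k * l n k)
    (N : ℕ) (hN : 1 ≤ N) (K : ℕ) :
    ∑ n ∈ Finset.Icc 1 N, ℓ n ≤
      Lc N K + (L ^ 2 * Real.exp L + Real.log (1 / q K)) * Real.sqrt N := by
  have hqs : Summable q := by
    by_contra h
    rw [tsum_eq_zero_of_not_summable h] at hqsum
    exact zero_ne_one hqsum
  have hLc_lb : ∀ m k, -(m * L) ≤ Lc m k := fun m k => by
    rw [hLc]
    simpa using card_nsmul_le_sum (Icc 1 m) (l · k) (-L) fun n _ => neg_le_of_abs_le (hl n k)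
  have hLc_succ : ∀ n, Lc (n + 1) = Lc n + l (n + 1) := fun n => funext fun k => by
    rw [Pi.add_apply, hLc, hLc, sum_Icc_succ_top (by omega)]
  have hp_eq : ∀ n, p (n + 1) = gibbsWeight q (Lc n) √(n + 1 : ℕ) := fun n => funext fun k => by
    have hw' : ∀ k, w (n + 1) k = q k * exp (-Lc n k / √(n + 1 : ℕ)) := fun k => by
      rw [hw, hβ, ← exp_mul, Nat.add_sub_cancel]; ring_nf
    simp only [hp, hw', gibbsWeight, expWeightSum]
  set Φ : ℕ → ℝ := fun m => √m * log (expWeightSum q (Lc m) √m)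
  have hmono : ∀ n, √(n + 1 : ℕ) * log (expWeightSum q (Lc n) √(n + 1 : ℕ)) ≤ Φ n := fun n => by
    rcases n.eq_zero_or_pos with rfl | hn
    · simp [Φ, expWeightSum, hLc, hqsum]
    · exact mul_log_expWeightSum_le hq hqs hqsum (hLc_lb n) (by positivity)
        (sqrt_le_sqrt (by simp))
  set D := L ^ 2 * exp L
  have hround : ∀ n, ℓ (n + 1) ≤ Φ n - Φ (n + 1) + D / 2 * (1 / √(n + 1 : ℕ)) := fun n => by
    have hstep := tsum_gibbsWeight_mul_le hq hqs (hLc_lb n) (hl (n + 1)) (c := √(n + 1 : ℕ))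
      (one_le_sqrt.2 (by simp))
    rw [← hp_eq, ← hLc_succ] at hstep
    have hD : D / (2 * √(n + 1 : ℕ)) = D / 2 * (1 / √(n + 1 : ℕ)) := by ring
    linarith [hℓ (n + 1), hmono n]
  have hΦN : √N * log (q K) - Lc N K ≤ Φ N :=
    mul_log_le_mul_log_expWeightSum hq hqs (hLc_lb N) (sqrt_pos.2 (Nat.cast_pos.2 hN)) K
  have htel := sum_Icc_le_sub_add_sum_of_le (f := ℓ) (d := fun n => D / 2 * (1 / √n)) hround N
  have hsqrt := mul_le_mul_of_nonneg_left (sum_Icc_one_div_sqrt_le N) (by positivity : 0 ≤ D / 2)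
  rw [← mul_sum] at htel
  simp only [Φ, CharP.cast_eq_zero, sqrt_zero, zero_mul] at htel
  rw [one_div, log_inv]
  linarith
end

section
/- Under the hypotheses of Theorem 1 (Γ a closed convex subset of a separable Banach space; λ bounded, convex in the prediction, uniformly continuous in the prediction uniformly in the observation; φ an approximation structure on X), there exists a prediction strategy whose outputs γ_n satisfy: for every Markov prediction rule D : X → Γ and every m ≥ 1 there is N_{D,m} such that for all N ≥ N_{D,m} and all sequences x_1,y_1,x_2,y_2,…, (1/N)∑_{n=1}^N λ(γ_n, y_n) ≤ (1/N)∑_{n=1}^N λ(D(φ_m(x_n)), y_n) + 2^{−m}. -/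
open Real Finset

section Aux

lemma exp_neg_le_quad {x : ℝ} (hx : 0 ≤ x) : Real.exp (-x) ≤ 1 - x + x ^ 2 := by
  have h1 : x + 1 ≤ Real.exp x := Real.add_one_le_exp x
  have hx1 : (0:ℝ) < 1 + x := by linarith
  have h2 : Real.exp (-x) = (Real.exp x)⁻¹ := Real.exp_neg x
  have h3 : (Real.exp x)⁻¹ ≤ (1 + x)⁻¹ := by
    apply inv_anti₀ hx1; linarith
  have h4 : (1 + x)⁻¹ ≤ 1 - x + x ^ 2 := by
    rw [inv_le_iff_one_le_mul₀ hx1]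
    nlinarith
  linarith [h2 ▸ h3.trans h4]

noncomputable def eww (η : ℝ) (ℓ : ℕ → ℕ → ℝ) (t j : ℕ) : ℝ :=
  (2:ℝ)⁻¹ ^ (j + 1) * Real.exp (-(η * ∑ u ∈ range t, ℓ u j))

noncomputable def ewW (η : ℝ) (ℓ : ℕ → ℕ → ℝ) (K t : ℕ) : ℝ :=
  ∑ j ∈ range K, eww η ℓ t j

lemma eww_pos (η : ℝ) (ℓ : ℕ → ℕ → ℝ) (t j : ℕ) : 0 < eww η ℓ t j := by
  unfold eww; positivity

lemma ewW_pos (η : ℝ) (ℓ : ℕ → ℕ → ℝ) {K : ℕ} (hK : 0 < K) (t : ℕ) : 0 < ewW η ℓ K t := by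
  unfold ewW
  exact Finset.sum_pos (fun j _ => eww_pos η ℓ t j) (by simp [Finset.nonempty_range_iff]; omega)

lemma eww_congr (η : ℝ) {ℓ ℓ' : ℕ → ℕ → ℝ} {t : ℕ} (j : ℕ)
    (h : ∀ u < t, ℓ u j = ℓ' u j) : eww η ℓ t j = eww η ℓ' t j := by
  unfold eww
  congr 4
  exact Finset.sum_congr rfl fun u hu => h u (Finset.mem_range.1 hu)

lemma ewW_congr (η : ℝ) {ℓ ℓ' : ℕ → ℕ → ℝ} {t : ℕ} (K : ℕ)
    (h : ∀ u < t, ∀ j, ℓ u j = ℓ' u j) : ewW η ℓ K t = ewW η ℓ' K t :=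
  Finset.sum_congr rfl fun j _ => eww_congr η j (fun u hu => h u hu j)

lemma half_geom (K : ℕ) : ∑ j ∈ range K, ((2:ℝ)⁻¹) ^ (j+1) = 1 - (2:ℝ)⁻¹ ^ K := by
  induction K with
  | zero => simp
  | succ n ih => rw [Finset.sum_range_succ, ih]; ring

lemma ew_regret (η B : ℝ) (hη : 0 < η) (hB : 0 < B)
    (ℓ : ℕ → ℕ → ℝ) (hℓ0 : ∀ t j, 0 ≤ ℓ t j) (hℓB : ∀ t j, ℓ t j ≤ B)
    (K k : ℕ) (hk : k < K) (T : ℕ) :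
    ∑ t ∈ range T, ∑ j ∈ range K, eww η ℓ t j / ewW η ℓ K t * ℓ t j
      ≤ (∑ t ∈ range T, ℓ t k) + ((k : ℝ) + 1) * Real.log 2 / η + η * B ^ 2 * T := by
  have hK : 0 < K := lt_of_le_of_lt (Nat.zero_le k) hk
  have hWpos : ∀ t, 0 < ewW η ℓ K t := ewW_pos η ℓ hK
  set M : ℕ → ℝ := fun t => ∑ j ∈ range K, eww η ℓ t j / ewW η ℓ K t * ℓ t j with hM
  have hq1 : ∀ t, ∑ j ∈ range K, eww η ℓ t j / ewW η ℓ K t = 1 := by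
    intro t; rw [← Finset.sum_div]; exact div_self (hWpos t).ne'
  have hMle : ∀ t, M t ≤ B := by
    intro t
    calc M t ≤ ∑ j ∈ range K, eww η ℓ t j / ewW η ℓ K t * B := by
          refine Finset.sum_le_sum fun j _ => ?_
          exact mul_le_mul_of_nonneg_left (hℓB t j)
            (div_nonneg (eww_pos η ℓ t j).le (hWpos t).le)
      _ = B := by rw [← Finset.sum_mul, hq1, one_mul]
  have key : ∀ t, η * M t ≤ Real.log (ewW η ℓ K t) - Real.log (ewW η ℓ K (t+1)) + η^2 * B^2 := by
    intro t
    have hstep : ewW η ℓ K (t+1) = ∑ j ∈ range K, eww η ℓ t j * Real.exp (-(η * ℓ t j)) := by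
      unfold ewW eww
      refine Finset.sum_congr rfl fun j _ => ?_
      rw [Finset.sum_range_succ, mul_add, neg_add, Real.exp_add, ← mul_assoc]
    have hMW : ∑ j ∈ range K, eww η ℓ t j * ℓ t j = ewW η ℓ K t * M t := by
      rw [hM, Finset.mul_sum]
      refine Finset.sum_congr rfl fun j _ => ?_
      rw [div_mul_eq_mul_div, mul_div_cancel₀ _ (hWpos t).ne']
    have hub : ewW η ℓ K (t+1) ≤ ewW η ℓ K t * (1 - η * M t + η^2 * B^2) := by
      rw [hstep]
      have h1 : ∀ j ∈ range K, eww η ℓ t j * Real.exp (-(η * ℓ t j))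
          ≤ eww η ℓ t j * (1 - η * ℓ t j + η^2 * B^2) := by
        intro j _
        refine mul_le_mul_of_nonneg_left ?_ (eww_pos η ℓ t j).le
        refine (exp_neg_le_quad (mul_nonneg hη.le (hℓ0 t j))).trans ?_
        have h2 := hℓB t j; have h3 := hℓ0 t j
        nlinarith [mul_le_mul_of_nonneg_left (mul_le_mul h2 h2 h3 hB.le) (sq_nonneg η)]
      refine (Finset.sum_le_sum h1).trans (le_of_eq ?_)
      have h4 : ∑ j ∈ range K, eww η ℓ t j * (1 - η * ℓ t j + η^2*B^2)
          = (∑ j ∈ range K, eww η ℓ t j) * (1 + η^2*B^2)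
            - η * ∑ j ∈ range K, eww η ℓ t j * ℓ t j := by
        rw [Finset.sum_mul, Finset.mul_sum, ← Finset.sum_sub_distrib]
        exact Finset.sum_congr rfl fun j _ => by ring
      rw [h4, hMW]
      have h5 : (∑ j ∈ range K, eww η ℓ t j) = ewW η ℓ K t := rfl
      rw [h5]; ring
    have hM0 : 0 ≤ M t := by
      refine Finset.sum_nonneg fun j _ => ?_
      exact mul_nonneg (div_nonneg (eww_pos η ℓ t j).le (hWpos t).le) (hℓ0 t j)
    have hpos : 0 < 1 - η * M t + η^2 * B^2 := by
      have h5 : η * M t ≤ η * B := mul_le_mul_of_nonneg_left (hMle t) hη.le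
      nlinarith [sq_nonneg (2*(η*B) - 1)]
    have hlog1 : Real.log (ewW η ℓ K (t+1))
        ≤ Real.log (ewW η ℓ K t) + Real.log (1 - η * M t + η^2*B^2) := by
      have := Real.log_le_log (hWpos (t+1)) hub
      rwa [Real.log_mul (hWpos t).ne' hpos.ne'] at this
    have hlog2 := Real.log_le_sub_one_of_pos hpos
    linarith
  have hsum : η * ∑ t ∈ range T, M t
      ≤ (Real.log (ewW η ℓ K 0) - Real.log (ewW η ℓ K T)) + T * (η^2*B^2) := by
    rw [Finset.mul_sum]
    calc ∑ t ∈ range T, η * M t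
        ≤ ∑ t ∈ range T, (Real.log (ewW η ℓ K t) - Real.log (ewW η ℓ K (t+1)) + η^2*B^2) :=
          Finset.sum_le_sum fun t _ => key t
      _ = (Real.log (ewW η ℓ K 0) - Real.log (ewW η ℓ K T)) + T * (η^2*B^2) := by
          rw [Finset.sum_add_distrib, Finset.sum_range_sub' (fun t => Real.log (ewW η ℓ K t)),
            Finset.sum_const, card_range, nsmul_eq_mul]
  have hW0 : Real.log (ewW η ℓ K 0) ≤ 0 := by
    apply Real.log_nonpos (hWpos 0).le
    have h6 : ewW η ℓ K 0 = ∑ j ∈ range K, ((2:ℝ)⁻¹)^(j+1) := by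
      unfold ewW eww
      refine Finset.sum_congr rfl fun j _ => ?_
      simp
    rw [h6, half_geom]
    have : (0:ℝ) ≤ (2:ℝ)⁻¹ ^ K := by positivity
    linarith
  have hWT : -Real.log (ewW η ℓ K T) ≤ ((k:ℝ)+1) * Real.log 2 + η * ∑ u ∈ range T, ℓ u k := by
    have h1 : eww η ℓ T k ≤ ewW η ℓ K T :=
      Finset.single_le_sum (fun j _ => (eww_pos η ℓ T j).le) (Finset.mem_range.2 hk)
    have h2 : Real.log (eww η ℓ T k)
        = -(((k:ℝ)+1) * Real.log 2) - η * ∑ u ∈ range T, ℓ u k := by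
      unfold eww
      rw [Real.log_mul (by positivity) (Real.exp_ne_zero _), Real.log_pow, Real.log_inv,
        Real.log_exp]
      push_cast; ring
    have h3 := Real.log_le_log (eww_pos η ℓ T k) h1
    rw [h2] at h3; linarith
  refine le_of_mul_le_mul_left ?_ hη
  have hrhs : η * ((∑ t ∈ range T, ℓ t k) + ((k:ℝ)+1) * Real.log 2 / η + η * B^2 * T)
      = η * (∑ t ∈ range T, ℓ t k) + ((k:ℝ)+1) * Real.log 2 + T * (η^2 * B^2) := by
    field_simp
  rw [hrhs]
  calc η * ∑ t ∈ range T, M t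
      ≤ (Real.log (ewW η ℓ K 0) - Real.log (ewW η ℓ K T)) + T * (η^2*B^2) := hsum
    _ ≤ η * (∑ t ∈ range T, ℓ t k) + ((k:ℝ)+1) * Real.log 2 + T * (η^2 * B^2) := by
        have := hWT; have := hW0; linarith

lemma ew_mix_le (η B : ℝ) (ℓ : ℕ → ℕ → ℝ) (hℓB : ∀ t j, ℓ t j ≤ B)
    (K : ℕ) (hK : 0 < K) (t : ℕ) :
    ∑ j ∈ range K, eww η ℓ t j / ewW η ℓ K t * ℓ t j ≤ B := by
  have hWpos := ewW_pos η ℓ hK t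
  have hq1 : ∑ j ∈ range K, eww η ℓ t j / ewW η ℓ K t = 1 := by
    rw [← Finset.sum_div]; exact div_self hWpos.ne'
  calc ∑ j ∈ range K, eww η ℓ t j / ewW η ℓ K t * ℓ t j
      ≤ ∑ j ∈ range K, eww η ℓ t j / ewW η ℓ K t * B :=
        Finset.sum_le_sum fun j _ => mul_le_mul_of_nonneg_left (hℓB t j)
          (div_nonneg (eww_pos η ℓ t j).le hWpos.le)
    _ = B := by rw [← Finset.sum_mul, hq1, one_mul]

lemma epoch_partition (N : ℕ) (hN : 1 ≤ N) :
    Finset.Icc 1 N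
      = (Finset.range (Nat.log 2 N + 1)).biUnion
          (fun r => Finset.Ico (2^r) (min (2^(r+1)) (N+1))) := by
  ext n
  simp only [Finset.mem_Icc, Finset.mem_biUnion, Finset.mem_range, Finset.mem_Ico, lt_min_iff]
  constructor
  · rintro ⟨h1, h2⟩
    refine ⟨Nat.log 2 n, ?_, ?_, ?_, ?_⟩
    · exact Nat.lt_succ_of_le (Nat.log_mono_right h2)
    · exact Nat.pow_log_le_self 2 (by omega)
    · exact Nat.lt_pow_succ_log_self (by norm_num) n
    · omega
  · rintro ⟨r, _, h2, _, h4⟩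
    have : 1 ≤ 2^r := Nat.one_le_two_pow
    omega

lemma epoch_disjoint (N : ℕ) :
    (↑(Finset.range (Nat.log 2 N + 1)) : Set ℕ).PairwiseDisjoint
      (fun r => Finset.Ico (2^r) (min (2^(r+1)) (N+1))) := by
  have key : ∀ a b : ℕ, a < b →
      Disjoint (Finset.Ico (2^a) (min (2^(a+1)) (N+1)))
        (Finset.Ico (2^b) (min (2^(b+1)) (N+1))) := by
    intro a b hab
    refine Finset.disjoint_left.2 fun n hn hn' => ?_
    simp only [Finset.mem_Ico, lt_min_iff] at hn hn'
    have : 2^(a+1) ≤ 2^b := Nat.pow_le_pow_right (by norm_num) (by omega)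
    omega
  intro r hr r' hr' hne
  rcases lt_or_gt_of_ne hne with h | h
  · exact key r r' h
  · exact (key r' r h).symm

lemma sum_sqrt_pow_le (R : ℕ) :
    ∑ r ∈ range (R+1), Real.sqrt (2^r) ≤ 4 * Real.sqrt (2^R) := by
  induction R with
  | zero => simp
  | succ n ih =>
    rw [Finset.sum_range_succ]
    have h1 : Real.sqrt (2^(n+1)) = Real.sqrt 2 * Real.sqrt (2^n) := by
      rw [pow_succ, mul_comm, Real.sqrt_mul (by positivity)]
    have h2 : (4:ℝ)/3 ≤ Real.sqrt 2 := by
      nlinarith [Real.sq_sqrt (show (0:ℝ) ≤ 2 by norm_num), Real.sqrt_nonneg 2]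
    have h3 : (0:ℝ) ≤ Real.sqrt (2^n) := Real.sqrt_nonneg _
    calc ∑ r ∈ range (n+1), Real.sqrt (2^r) + Real.sqrt (2^(n+1))
        ≤ 4 * Real.sqrt (2^n) + Real.sqrt 2 * Real.sqrt (2^n) := by rw [h1]; linarith
      _ ≤ 4 * Real.sqrt (2^(n+1)) := by rw [h1]; nlinarith

lemma sum_pow_two_real (k : ℕ) : ∑ r ∈ range k, (2:ℝ)^r = 2^k - 1 := by
  induction k with
  | zero => simp
  | succ n ih => rw [Finset.sum_range_succ, ih]; ring

noncomputable def strat {E X Y : Type*} [NormedAddCommGroup E] [NormedSpace ℝ E]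
    (lam : E → Y → ℝ) (L : ℝ) (e : ℕ → X → E) (p₀ : X × Y) :
    List (X × Y) → X → E := fun h xx =>
  (ewW (((2*L+1) * Real.sqrt (2^(Nat.log 2 (h.length+1))))⁻¹)
      (fun t j => lam (e j (h.getD (2^(Nat.log 2 (h.length+1)) - 1 + t) p₀).1)
        (h.getD (2^(Nat.log 2 (h.length+1)) - 1 + t) p₀).2 + L)
      (Nat.log 2 (h.length+1) + 1) (h.length + 1 - 2^(Nat.log 2 (h.length+1))))⁻¹ •
    ∑ j ∈ Finset.range (Nat.log 2 (h.length+1) + 1),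
      eww (((2*L+1) * Real.sqrt (2^(Nat.log 2 (h.length+1))))⁻¹)
        (fun t j => lam (e j (h.getD (2^(Nat.log 2 (h.length+1)) - 1 + t) p₀).1)
          (h.getD (2^(Nat.log 2 (h.length+1)) - 1 + t) p₀).2 + L)
        (h.length + 1 - 2^(Nat.log 2 (h.length+1))) j • e j xx

lemma strat_apply {E X Y : Type*} [NormedAddCommGroup E] [NormedSpace ℝ E]
    (lam : E → Y → ℝ) (L : ℝ) (e : ℕ → X → E) (p₀ : X × Y)
    (h : List (X × Y)) (xx : X) (n r : ℕ) (hn : h.length + 1 = n) (hr : Nat.log 2 n = r) :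
    strat lam L e p₀ h xx
      = (ewW (((2*L+1) * Real.sqrt (2^r))⁻¹)
          (fun t j => lam (e j (h.getD (2^r - 1 + t) p₀).1) (h.getD (2^r - 1 + t) p₀).2 + L)
          (r + 1) (n - 2^r))⁻¹ •
        ∑ j ∈ Finset.range (r + 1),
          eww (((2*L+1) * Real.sqrt (2^r))⁻¹)
            (fun t j => lam (e j (h.getD (2^r - 1 + t) p₀).1) (h.getD (2^r - 1 + t) p₀).2 + L)
            (n - 2^r) j • e j xx := by
  subst hn; subst hr; rfl

lemma strat_mem {E X Y : Type*} [NormedAddCommGroup E] [NormedSpace ℝ E]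
    {s : Set E} (hconv : Convex ℝ s)
    (lam : E → Y → ℝ) (L : ℝ) (e : ℕ → X → E) (p₀ : X × Y)
    (hes : ∀ j xx, e j xx ∈ s) (h : List (X × Y)) (xx : X) :
    strat lam L e p₀ h xx ∈ s := by
  unfold strat
  rw [Finset.smul_sum]
  simp only [smul_smul]
  have hW : 0 < ewW (((2*L+1) * Real.sqrt (2^(Nat.log 2 (h.length+1))))⁻¹)
      (fun t j => lam (e j (h.getD (2^(Nat.log 2 (h.length+1)) - 1 + t) p₀).1)
        (h.getD (2^(Nat.log 2 (h.length+1)) - 1 + t) p₀).2 + L)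
      (Nat.log 2 (h.length+1) + 1) (h.length + 1 - 2^(Nat.log 2 (h.length+1))) :=
    ewW_pos _ _ (Nat.succ_pos _) _
  refine hconv.sum_mem (fun j _ => ?_) ?_ (fun j _ => hes j xx)
  · exact mul_nonneg (inv_nonneg.2 hW.le) (eww_pos _ _ _ _).le
  · rw [← Finset.mul_sum]
    exact inv_mul_cancel₀ hW.ne'

lemma getD_hist {X Y : Type*} (x : ℕ → X) (y : ℕ → Y) (p₀ : X × Y) (n i : ℕ) (hi : i < n - 1) :
    (((List.range (n-1)).map fun i => (x (i+1), y (i+1))).getD i p₀) = (x (i+1), y (i+1)) := by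
  rw [List.getD_eq_getElem?_getD, List.getElem?_map, List.getElem?_range hi]
  rfl

end Aux
set_option maxHeartbeats 1000000 in
/-- Theorem 1 (deterministic case): if `X` carries an approximation structure
`φ` (idempotent maps with finite images of at most `2^m` points), `Γ = s` is a
closed convex subset of a separable Banach space, and the loss `λ` is bounded,
convex in the prediction, and uniformly continuous in the prediction uniformly
in the observation, then there is a Markov-universal prediction strategy: a
strategy `S` (mapping histories to predictions) such that for every prediction
rule `D : X → Γ` and every `m ≥ 1` there is `N₀` such that for all `N ≥ N₀`
and all sequences of Reality's moves,
`(1/N)∑_{n=1}^N λ(γ n, y n) ≤ (1/N)∑_{n=1}^N λ(D(φ m (x n)), y n) + 2^{−m}`,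
where `γ n` is the strategy's output on round `n`. -/
theorem markov_universal_deterministic
    {E : Type*} [NormedAddCommGroup E] [NormedSpace ℝ E] [CompleteSpace E]
    [TopologicalSpace.SeparableSpace E]
    {X Y : Type*} (s : Set E) (hsne : s.Nonempty)
    (hclosed : IsClosed s) (hconv : Convex ℝ s)
    (lam : E → Y → ℝ) (L : ℝ) (hbdd : ∀ g y, |lam g y| ≤ L)
    (hconvlam : ∀ y, ConvexOn ℝ s fun g => lam g y)
    (hunif : ∀ ε > (0 : ℝ), ∃ δ > (0 : ℝ), ∀ g ∈ s, ∀ g' ∈ s,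
      dist g g' < δ → ∀ y, |lam g y - lam g' y| < ε)
    (φ : ℕ → X → X)
    (hidem : ∀ m x, φ m (φ m x) = φ m x)
    (hfin : ∀ m, (Set.range (φ m)).Finite ∧ (Set.range (φ m)).ncard ≤ 2 ^ m) :
    ∃ S : List (X × Y) → X → E,
      (∀ h x, S h x ∈ s) ∧
      ∀ D : X → E, (∀ x, D x ∈ s) → ∀ m : ℕ, 1 ≤ m →
        ∃ N₀ : ℕ, ∀ N ≥ N₀, ∀ (x : ℕ → X) (y : ℕ → Y),
          (1 / (N : ℝ)) * ∑ n ∈ Finset.Icc 1 N,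
              lam (S ((List.range (n - 1)).map fun i => (x (i + 1), y (i + 1)))
                    (x n)) (y n)
            ≤ (1 / (N : ℝ)) * (∑ n ∈ Finset.Icc 1 N,
                lam (D (φ m (x n))) (y n)) + 2 ^ (-(m : ℝ)) := by
  classical
  rcases isEmpty_or_nonempty X with hX | hX
  · exact ⟨fun _ _ => hsne.choose, fun _ _ => hsne.choose_spec,
      fun D hD m hm => ⟨1, fun N hN x y => (hX.elim (x 0))⟩⟩
  rcases isEmpty_or_nonempty Y with hY | hY
  · exact ⟨fun _ _ => hsne.choose, fun _ _ => hsne.choose_spec,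
      fun D hD m hm => ⟨1, fun N hN x y => (hY.elim (y 0))⟩⟩
  obtain ⟨x₀⟩ := hX
  obtain ⟨y₀⟩ := hY
  have hL0 : (0:ℝ) ≤ L := (abs_nonneg _).trans (hbdd 0 y₀)
  have hBpos : (0:ℝ) < 2*L+1 := by linarith
  have hsec : SecondCountableTopology E := UniformSpace.secondCountable_of_separable E
  have hnes : Nonempty s := hsne.to_subtype
  set d : ℕ → E := fun j => (TopologicalSpace.denseSeq s j : E) with hd
  have hds : ∀ j, d j ∈ s := fun j => (TopologicalSpace.denseSeq s j).2
  have hdense : ∀ g ∈ s, ∀ δ > (0:ℝ), ∃ j : ℕ, dist (d j) g < δ := by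
    intro g hg δ hδ
    obtain ⟨j, hj⟩ := Metric.denseRange_iff.1 (TopologicalSpace.denseRange_denseSeq s) ⟨g, hg⟩ δ hδ
    refine ⟨j, ?_⟩
    rw [dist_comm]
    simpa [Subtype.dist_eq, hd] using hj
  obtain ⟨u, hu⟩ := exists_surjective_nat (Σ m : ℕ, (((hfin m).1.toFinset : Finset X) → ℕ))
  set F : (Σ mm : ℕ, (((hfin mm).1.toFinset : Finset X) → ℕ)) → X → E := fun p xx =>
    d (if h : φ p.1 xx ∈ (hfin p.1).1.toFinset then p.2 ⟨φ p.1 xx, h⟩ else 0) with hF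
  set e : ℕ → X → E := fun k => F (u k) with he
  have hes : ∀ k xx, e k xx ∈ s := fun k xx => hds _
  clear_value F
  have happrox : ∀ (D : X → E), (∀ z, D z ∈ s) → ∀ m : ℕ, ∀ δ > (0:ℝ),
      ∃ k : ℕ, ∀ xx : X, dist (e k xx) (D (φ m xx)) < δ := by
    intro D hD m δ hδ
    have hch : ∀ z : ((hfin m).1.toFinset : Finset X), ∃ j : ℕ, dist (d j) (D (z:X)) < δ :=
      fun z => hdense (D (z:X)) (hD (z:X)) δ hδ
    choose jz hjz using hch
    obtain ⟨k, hk⟩ := hu ⟨m, jz⟩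
    refine ⟨k, fun xx => ?_⟩
    have hmem : φ m xx ∈ (hfin m).1.toFinset := (Set.Finite.mem_toFinset _).2 ⟨xx, rfl⟩
    have hek : e k xx = d (jz ⟨φ m xx, hmem⟩) := by
      have h1 : e k xx = F ⟨m, jz⟩ xx := by show F (u k) xx = F ⟨m, jz⟩ xx; rw [hk]
      rw [h1, hF]
      simp only
      rw [dif_pos hmem]
    rw [hek]
    exact hjz ⟨φ m xx, hmem⟩
  refine ⟨strat lam L e (x₀, y₀),
    fun h xx => strat_mem hconv lam L e (x₀, y₀) hes h xx, ?_⟩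
  intro D hD m hm
  set ε : ℝ := 2 ^ (-(m:ℝ)) / 2 with hεdef
  have hεpos : 0 < ε := by
    have h1 : (0:ℝ) < 2 ^ (-(m:ℝ)) := Real.rpow_pos_of_pos (by norm_num) _
    rw [hεdef]; linarith
  obtain ⟨δ, hδpos, hδ⟩ := hunif ε hεpos
  obtain ⟨k, hk⟩ := happrox D hD m δ hδpos
  have hcomp : ∀ xx yy, lam (e k xx) yy ≤ lam (D (φ m xx)) yy + ε := by
    intro xx yy
    have h1 := hδ (e k xx) (hes k xx) (D (φ m xx)) (hD _) (hk xx) yy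
    have h2 := (abs_lt.1 h1).2
    linarith
  set C : ℝ := (2*L+1) * ((k:ℝ) + 2) with hCdef
  have hCpos : 0 < C := by rw [hCdef]; positivity
  set A : ℝ := C * (2^k + 4) / ε with hAdef
  have hA0 : 0 ≤ A := by rw [hAdef]; positivity
  refine ⟨max 1 ⌈A^2⌉₊, fun N hN x y => ?_⟩
  have hN1 : 1 ≤ N := le_trans (le_max_left _ _) hN
  have hNA : A^2 ≤ (N:ℝ) := by
    have h1 : ⌈A^2⌉₊ ≤ N := le_trans (le_max_right _ _) hN
    calc A^2 ≤ (⌈A^2⌉₊:ℝ) := Nat.le_ceil _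
      _ ≤ (N:ℝ) := by exact_mod_cast h1
  set ηr : ℕ → ℝ := fun r => ((2*L+1) * Real.sqrt (2^r))⁻¹ with hηrdef
  set ℓr : ℕ → ℕ → ℕ → ℝ := fun r t j => lam (e j (x (2^r + t))) (y (2^r + t)) + L with hℓrdef
  have hsqpos : ∀ r : ℕ, (0:ℝ) < Real.sqrt (2^r) := fun r => Real.sqrt_pos.2 (by positivity)
  have hηpos : ∀ r, 0 < ηr r := fun r => by
    rw [hηrdef]; exact inv_pos.2 (mul_pos hBpos (hsqpos r))
  have hℓ0 : ∀ r t j, 0 ≤ ℓr r t j := by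
    intro r t j
    have h1 := (abs_le.1 (hbdd (e j (x (2^r+t))) (y (2^r+t)))).1
    rw [hℓrdef]; dsimp only; linarith
  have hℓB : ∀ r t j, ℓr r t j ≤ 2*L+1 := by
    intro r t j
    have h1 := (abs_le.1 (hbdd (e j (x (2^r+t))) (y (2^r+t)))).2
    rw [hℓrdef]; dsimp only; linarith
  have claimA : ∀ r t : ℕ, 2^r + t < 2^(r+1) →
      lam (strat lam L e (x₀,y₀)
            ((List.range (2^r + t - 1)).map fun i => (x (i+1), y (i+1))) (x (2^r+t)))
          (y (2^r+t)) + L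
        ≤ ∑ j ∈ range (r+1), eww (ηr r) (ℓr r) t j / ewW (ηr r) (ℓr r) (r+1) t * ℓr r t j := by
    intro r t hlt
    have hp1 : 1 ≤ 2^r := Nat.one_le_two_pow
    set n := 2^r + t with hn
    set h := (List.range (n-1)).map fun i => (x (i+1), y (i+1)) with hh
    have hlen : h.length + 1 = n := by
      rw [hh, List.length_map, List.length_range]; omega
    have hlog : Nat.log 2 n = r := Nat.log_eq_of_pow_le_of_lt_pow (by omega) (by omega)
    have hteq : n - 2^r = t := by omega
    have hstr := strat_apply lam L e (x₀,y₀) h (x n) n r hlen hlog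
    rw [hteq] at hstr
    have hℓeq : ∀ u', u' < t → ∀ j,
        lam (e j (h.getD (2^r - 1 + u') (x₀,y₀)).1) (h.getD (2^r - 1 + u') (x₀,y₀)).2 + L
          = ℓr r u' j := by
      intro u' hu' j
      have h1 : 2^r - 1 + u' < n - 1 := by omega
      have hgd : h.getD (2^r - 1 + u') (x₀,y₀) = (x (2^r - 1 + u' + 1), y (2^r - 1 + u' + 1)) := by
        rw [hh]; exact getD_hist x y (x₀,y₀) n _ h1
      have h2 : 2^r - 1 + u' + 1 = 2^r + u' := by omega
      rw [hgd, h2]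
    have hWeq : ewW (((2*L+1) * Real.sqrt (2^r))⁻¹)
        (fun t' j => lam (e j (h.getD (2^r - 1 + t') (x₀,y₀)).1)
          (h.getD (2^r - 1 + t') (x₀,y₀)).2 + L) (r+1) t
        = ewW (ηr r) (ℓr r) (r+1) t :=
      ewW_congr _ _ (fun u' hu' j => hℓeq u' hu' j)
    have hsum2 : ∑ j ∈ range (r+1), eww (((2*L+1) * Real.sqrt (2^r))⁻¹)
          (fun t' j => lam (e j (h.getD (2^r - 1 + t') (x₀,y₀)).1)
            (h.getD (2^r - 1 + t') (x₀,y₀)).2 + L) t j • e j (x n)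
        = ∑ j ∈ range (r+1), eww (ηr r) (ℓr r) t j • e j (x n) :=
      Finset.sum_congr rfl fun j _ => by rw [eww_congr _ j (fun u' hu' => hℓeq u' hu' j)]
    rw [hWeq, hsum2] at hstr
    have hWpos : 0 < ewW (ηr r) (ℓr r) (r+1) t := ewW_pos _ _ (Nat.succ_pos r) t
    have hγ : strat lam L e (x₀,y₀) h (x n)
        = ∑ j ∈ range (r+1),
            (eww (ηr r) (ℓr r) t j / ewW (ηr r) (ℓr r) (r+1) t) • e j (x n) := by
      rw [hstr, Finset.smul_sum]
      exact Finset.sum_congr rfl fun j _ => by rw [smul_smul, div_eq_inv_mul]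
    have hq0 : ∀ j ∈ range (r+1), 0 ≤ eww (ηr r) (ℓr r) t j / ewW (ηr r) (ℓr r) (r+1) t :=
      fun j _ => div_nonneg (eww_pos _ _ _ _).le hWpos.le
    have hq1 : ∑ j ∈ range (r+1), eww (ηr r) (ℓr r) t j / ewW (ηr r) (ℓr r) (r+1) t = 1 := by
      rw [← Finset.sum_div]; exact div_self hWpos.ne'
    have hjen := (hconvlam (y n)).map_sum_le hq0 hq1 (fun j _ => hes j (x n))
    rw [hγ]
    have hmain : lam (∑ j ∈ range (r+1),
          (eww (ηr r) (ℓr r) t j / ewW (ηr r) (ℓr r) (r+1) t) • e j (x n)) (y n)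
        ≤ ∑ j ∈ range (r+1),
            (eww (ηr r) (ℓr r) t j / ewW (ηr r) (ℓr r) (r+1) t) * lam (e j (x n)) (y n) := by
      simpa using hjen
    have hrhs : ∑ j ∈ range (r+1), eww (ηr r) (ℓr r) t j / ewW (ηr r) (ℓr r) (r+1) t * ℓr r t j
        = (∑ j ∈ range (r+1), eww (ηr r) (ℓr r) t j / ewW (ηr r) (ℓr r) (r+1) t
            * lam (e j (x n)) (y n)) + L := by
      have hterm : ∀ j ∈ range (r+1),
          eww (ηr r) (ℓr r) t j / ewW (ηr r) (ℓr r) (r+1) t * ℓr r t j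
          = eww (ηr r) (ℓr r) t j / ewW (ηr r) (ℓr r) (r+1) t * lam (e j (x n)) (y n)
            + eww (ηr r) (ℓr r) t j / ewW (ηr r) (ℓr r) (r+1) t * L := by
        intro j _
        have hl : ℓr r t j = lam (e j (x n)) (y n) + L := rfl
        rw [hl]; ring
      rw [Finset.sum_congr rfl hterm, Finset.sum_add_distrib, ← Finset.sum_mul, hq1, one_mul]
    rw [hrhs]
    linarith [hmain]
  have claimB : ∀ r T : ℕ, T ≤ 2^r →
      ∑ t ∈ range T, ∑ j ∈ range (r+1),
          eww (ηr r) (ℓr r) t j / ewW (ηr r) (ℓr r) (r+1) t * ℓr r t j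
        ≤ (∑ t ∈ range T, ℓr r t k)
          + C * (if r < k then (2:ℝ)^r else Real.sqrt (2^r)) := by
    intro r T hT
    by_cases hrk : r < k
    · rw [if_pos hrk]
      have h1 : ∀ t ∈ range T, ∑ j ∈ range (r+1),
          eww (ηr r) (ℓr r) t j / ewW (ηr r) (ℓr r) (r+1) t * ℓr r t j ≤ 2*L+1 :=
        fun t _ => ew_mix_le (ηr r) (2*L+1) (ℓr r) (hℓB r) (r+1) (Nat.succ_pos r) t
      have h2 : ∑ t ∈ range T, ∑ j ∈ range (r+1),
          eww (ηr r) (ℓr r) t j / ewW (ηr r) (ℓr r) (r+1) t * ℓr r t j ≤ (T:ℝ) * (2*L+1) := by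
        calc ∑ t ∈ range T, ∑ j ∈ range (r+1),
              eww (ηr r) (ℓr r) t j / ewW (ηr r) (ℓr r) (r+1) t * ℓr r t j
            ≤ ∑ _t ∈ range T, (2*L+1) := Finset.sum_le_sum h1
          _ = (T:ℝ) * (2*L+1) := by rw [Finset.sum_const, card_range, nsmul_eq_mul]
      have h3 : 0 ≤ ∑ t ∈ range T, ℓr r t k := Finset.sum_nonneg fun t _ => hℓ0 r t k
      have hTr : (T:ℝ) ≤ (2:ℝ)^r := by exact_mod_cast hT
      have hq : (2*L+1) * (T:ℝ) ≤ (2*L+1) * (2:ℝ)^r := mul_le_mul_of_nonneg_left hTr hBpos.le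
      have hw : 0 ≤ (2*L+1) * (2:ℝ)^r * ((k:ℝ)+1) := by positivity
      rw [hCdef]
      nlinarith [h2, h3, hq, hw]
    · push_neg at hrk
      have hkK : k < r + 1 := Nat.lt_succ_of_le hrk
      have hreg := ew_regret (ηr r) (2*L+1) (hηpos r) hBpos (ℓr r) (hℓ0 r) (hℓB r) (r+1) k hkK T
      refine hreg.trans ?_
      rw [if_neg (by omega), hCdef]
      have hsp := hsqpos r
      have hss : Real.sqrt ((2:ℝ)^r) * Real.sqrt ((2:ℝ)^r) = (2:ℝ)^r :=
        Real.mul_self_sqrt (by positivity)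
      have hηeq : ηr r = ((2*L+1) * Real.sqrt ((2:ℝ)^r))⁻¹ := rfl
      have hTr : (T:ℝ) ≤ Real.sqrt ((2:ℝ)^r) * Real.sqrt ((2:ℝ)^r) := by
        rw [hss]; exact_mod_cast hT
      have hlog2 : Real.log 2 ≤ 1 := by
        linarith [Real.log_le_sub_one_of_pos (show (0:ℝ) < 2 by norm_num)]
      have hlogpos : 0 ≤ Real.log 2 := Real.log_nonneg (by norm_num)
      have e1 : ((k:ℝ)+1) * Real.log 2 / ηr r
          = ((k:ℝ)+1) * Real.log 2 * ((2*L+1) * Real.sqrt ((2:ℝ)^r)) := by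
        rw [hηeq, div_eq_mul_inv, inv_inv]
      have e2 : ηr r * (2*L+1)^2 * (T:ℝ) ≤ (2*L+1) * Real.sqrt ((2:ℝ)^r) := by
        rw [hηeq, mul_assoc, inv_mul_le_iff₀ (by positivity)]
        nlinarith [mul_le_mul_of_nonneg_left hTr (by positivity : (0:ℝ) ≤ (2*L+1)^2)]
      rw [e1]
      have hk0 : (0:ℝ) ≤ (k:ℝ) := Nat.cast_nonneg k
      have h6 : 0 ≤ ((k:ℝ)+1) * ((2*L+1) * Real.sqrt ((2:ℝ)^r)) := by positivity
      nlinarith [e2, hsp.le, hBpos, hk0, hlog2, hlogpos, h6]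
  -- assembly
  set R := Nat.log 2 N with hRdef
  have hpart : ∀ f : ℕ → ℝ, ∑ n ∈ Finset.Icc 1 N, f n
      = ∑ r ∈ range (R+1), ∑ t ∈ range (min (2^(r+1)) (N+1) - 2^r), f (2^r + t) := by
    intro f
    rw [epoch_partition N hN1, Finset.sum_biUnion (epoch_disjoint N)]
    exact Finset.sum_congr rfl fun r _ => Finset.sum_Ico_eq_sum_range f _ _
  have hTrle : ∀ r : ℕ, min (2^(r+1)) (N+1) - 2^r ≤ 2^r := by
    intro r
    have h3 : 1 ≤ 2^r := Nat.one_le_two_pow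
    have h2 : 2^(r+1) = 2^r + 2^r := by rw [pow_succ, Nat.mul_two]
    omega
  have hifsum : ∑ r ∈ range (R+1), (if r < k then (2:ℝ)^r else Real.sqrt (2^r))
      ≤ 2^k + 4 * Real.sqrt (2^R) := by
    have h1 : ∑ r ∈ range (R+1), (if r < k then (2:ℝ)^r else Real.sqrt (2^r))
        ≤ ∑ r ∈ range (R+1), ((if r < k then (2:ℝ)^r else 0) + Real.sqrt (2^r)) := by
      refine Finset.sum_le_sum fun r _ => ?_
      split
      · have := Real.sqrt_nonneg ((2:ℝ)^r); linarith
      · simp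
    have h2 : ∑ r ∈ range (R+1), (if r < k then (2:ℝ)^r else 0) ≤ 2^k := by
      rw [← Finset.sum_filter]
      have hsub : (range (R+1)).filter (· < k) ⊆ range k := by
        intro r hr
        simp only [Finset.mem_filter, Finset.mem_range] at hr ⊢
        exact hr.2
      calc ∑ r ∈ (range (R+1)).filter (· < k), (2:ℝ)^r
          ≤ ∑ r ∈ range k, (2:ℝ)^r :=
            Finset.sum_le_sum_of_subset_of_nonneg hsub (fun i _ _ => by positivity)
        _ = 2^k - 1 := sum_pow_two_real k
        _ ≤ 2^k := by linarith
    rw [Finset.sum_add_distrib] at h1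
    linarith [sum_sqrt_pow_le R, h1, h2]
  have hsqRN : Real.sqrt ((2:ℝ)^R) ≤ Real.sqrt N := by
    apply Real.sqrt_le_sqrt
    have h1 : 2^R ≤ N := Nat.pow_log_le_self 2 (by omega)
    exact_mod_cast h1
  have main1 : ∑ n ∈ Finset.Icc 1 N,
        (lam (strat lam L e (x₀,y₀)
          ((List.range (n-1)).map fun i => (x (i+1), y (i+1))) (x n)) (y n) + L)
      ≤ (∑ n ∈ Finset.Icc 1 N, (lam (e k (x n)) (y n) + L))
        + C * (2^k + 4 * Real.sqrt N) := by
    rw [hpart (fun n => lam (strat lam L e (x₀,y₀)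
      ((List.range (n-1)).map fun i => (x (i+1), y (i+1))) (x n)) (y n) + L)]
    rw [hpart (fun n => lam (e k (x n)) (y n) + L)]
    have hstep : ∀ r ∈ range (R+1),
        ∑ t ∈ range (min (2^(r+1)) (N+1) - 2^r),
            (lam (strat lam L e (x₀,y₀)
              ((List.range (2^r + t - 1)).map fun i => (x (i+1), y (i+1))) (x (2^r+t)))
              (y (2^r+t)) + L)
          ≤ (∑ t ∈ range (min (2^(r+1)) (N+1) - 2^r), ℓr r t k)
            + C * (if r < k then (2:ℝ)^r else Real.sqrt (2^r)) := by
      intro r _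
      have hA1 : ∀ t ∈ range (min (2^(r+1)) (N+1) - 2^r),
          lam (strat lam L e (x₀,y₀)
            ((List.range (2^r + t - 1)).map fun i => (x (i+1), y (i+1))) (x (2^r+t)))
            (y (2^r+t)) + L
          ≤ ∑ j ∈ range (r+1), eww (ηr r) (ℓr r) t j / ewW (ηr r) (ℓr r) (r+1) t * ℓr r t j := by
        intro t ht
        refine claimA r t ?_
        have h1 := hTrle r
        have h2 := Finset.mem_range.1 ht
        have h3 : 2^(r+1) = 2^r + 2^r := by rw [pow_succ]; omega
        omega
      exact (Finset.sum_le_sum hA1).trans (claimB r _ (hTrle r))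
    calc ∑ r ∈ range (R+1), ∑ t ∈ range (min (2^(r+1)) (N+1) - 2^r),
            (lam (strat lam L e (x₀,y₀)
              ((List.range (2^r + t - 1)).map fun i => (x (i+1), y (i+1))) (x (2^r+t)))
              (y (2^r+t)) + L)
        ≤ ∑ r ∈ range (R+1), ((∑ t ∈ range (min (2^(r+1)) (N+1) - 2^r), ℓr r t k)
            + C * (if r < k then (2:ℝ)^r else Real.sqrt (2^r))) :=
          Finset.sum_le_sum hstep
      _ = (∑ r ∈ range (R+1), ∑ t ∈ range (min (2^(r+1)) (N+1) - 2^r), ℓr r t k)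
          + C * ∑ r ∈ range (R+1), (if r < k then (2:ℝ)^r else Real.sqrt (2^r)) := by
          rw [Finset.sum_add_distrib, Finset.mul_sum]
      _ ≤ (∑ r ∈ range (R+1), ∑ t ∈ range (min (2^(r+1)) (N+1) - 2^r), ℓr r t k)
          + C * (2^k + 4 * Real.sqrt N) := by
          have h1 : ∑ r ∈ range (R+1), (if r < k then (2:ℝ)^r else Real.sqrt (2^r))
              ≤ 2^k + 4 * Real.sqrt N := by
            refine hifsum.trans ?_
            have := hsqRN; linarith
          have := mul_le_mul_of_nonneg_left h1 hCpos.le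
          linarith
  have hstrip : ∀ g : ℕ → ℝ, ∑ n ∈ Finset.Icc 1 N, (g n + L)
      = (∑ n ∈ Finset.Icc 1 N, g n) + N * L := by
    intro g
    rw [Finset.sum_add_distrib, Finset.sum_const, Nat.card_Icc, nsmul_eq_mul]
    norm_num
  have main2 : ∑ n ∈ Finset.Icc 1 N,
        lam (strat lam L e (x₀,y₀)
          ((List.range (n-1)).map fun i => (x (i+1), y (i+1))) (x n)) (y n)
      ≤ (∑ n ∈ Finset.Icc 1 N, lam (e k (x n)) (y n)) + C * (2^k + 4 * Real.sqrt N) := by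
    have h1 := main1
    rw [hstrip (fun n => lam (strat lam L e (x₀,y₀)
      ((List.range (n-1)).map fun i => (x (i+1), y (i+1))) (x n)) (y n)),
      hstrip (fun n => lam (e k (x n)) (y n))] at h1
    linarith
  have main3 : ∑ n ∈ Finset.Icc 1 N, lam (e k (x n)) (y n)
      ≤ (∑ n ∈ Finset.Icc 1 N, lam (D (φ m (x n))) (y n)) + N * ε := by
    calc ∑ n ∈ Finset.Icc 1 N, lam (e k (x n)) (y n)
        ≤ ∑ n ∈ Finset.Icc 1 N, (lam (D (φ m (x n))) (y n) + ε) :=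
          Finset.sum_le_sum fun n _ => hcomp (x n) (y n)
      _ = (∑ n ∈ Finset.Icc 1 N, lam (D (φ m (x n))) (y n)) + N * ε := by
          rw [Finset.sum_add_distrib, Finset.sum_const, Nat.card_Icc, nsmul_eq_mul]
          norm_num
  have hsN : A ≤ Real.sqrt N := by
    rw [show A = Real.sqrt (A^2) from (Real.sqrt_sq hA0).symm]
    exact Real.sqrt_le_sqrt hNA
  have hregN : C * (2^k + 4 * Real.sqrt N) ≤ ε * N := by
    have h1N : (1:ℝ) ≤ Real.sqrt N := Real.one_le_sqrt.2 (by exact_mod_cast hN1)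
    have hss : Real.sqrt N * Real.sqrt N = (N:ℝ) := Real.mul_self_sqrt (Nat.cast_nonneg N)
    have hCA : C * (2^k + 4) ≤ ε * Real.sqrt N := by
      have h2 := mul_le_mul_of_nonneg_left hsN hεpos.le
      rw [hAdef, mul_div_cancel₀ _ hεpos.ne'] at h2
      exact h2
    have h3 : (0:ℝ) ≤ C * 2^k := by positivity
    have h4 := mul_le_mul_of_nonneg_right hCA (Real.sqrt_nonneg (N:ℝ))
    nlinarith [h4, hss, h1N, h3]
  have hNpos : (0:ℝ) < N := by exact_mod_cast hN1
  have h2ε : (2:ℝ) ^ (-(m:ℝ)) = 2 * ε := by rw [hεdef]; ring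
  rw [h2ε]
  have htot : ∑ n ∈ Finset.Icc 1 N,
        lam (strat lam L e (x₀,y₀)
          ((List.range (n-1)).map fun i => (x (i+1), y (i+1))) (x n)) (y n)
      ≤ (∑ n ∈ Finset.Icc 1 N, lam (D (φ m (x n))) (y n)) + N * (2*ε) := by
    have := main2; have := main3; have := hregN; linarith
  calc (1/(N:ℝ)) * ∑ n ∈ Finset.Icc 1 N,
        lam (strat lam L e (x₀,y₀)
          ((List.range (n-1)).map fun i => (x (i+1), y (i+1))) (x n)) (y n)
      ≤ (1/(N:ℝ)) * ((∑ n ∈ Finset.Icc 1 N, lam (D (φ m (x n))) (y n)) + N * (2*ε)) :=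
        mul_le_mul_of_nonneg_left htot (by positivity)
    _ = (1/(N:ℝ)) * (∑ n ∈ Finset.Icc 1 N, lam (D (φ m (x n))) (y n)) + 2*ε := by
        field_simp
end
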